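/- arXiv:1909.10205 — 3 statements merged into one kernel-verified Lean document; each statement's English description precedes it below -/
import Mathlib

section
/- Let Q be an even positive integer, μ ≥ 1 an integer, π a permutation of {1,2,…,μ}, and b_1,…,b_μ, b, b' ∈ ℤ_Q. For each integer κ with 0 ≤ κ ≤ 2^μ − 1, write its binary representation κ = Σ_{i=1}^{μ} κ_i 2^{i−1} with κ_i ∈ {0,1}, and define f_κ = (Q/2)·Σ_{k=1}^{μ−1} κ_{π(k)} κ_{π(k+1)} + Σ_{k=1}^{μ} b_k κ_k + b (mod Q). Let ω = exp(2πi/Q). Then the two complex sequences c = (ω^{f_κ})_{κ=0}^{2^μ−1} and d = (ω^{f_κ + (Q/2)κ_{π(1)} + b'})_{κ=0}^{2^μ−1} form a Golay complementary pair of length 2^μ. -/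
/-!
With `ψ = ZMod.stdAddChar`, so that `ω ^ x.val = ψ x` and `ψ (Q/2) = -1`, the sum of the two
autocorrelations at shift `τ` is `Σ_m ψ (f m - f (m + τ)) · (1 + (-1) ^ (m_{p 0} + (m+τ)_{p 0}))`:
only the pairs `(m, m + τ)` whose bits at `p 0` agree contribute. For such a pair let `j ≥ 1` be
the first index with `m_{p j} ≠ (m+τ)_{p j}`. Flipping bit `p (j - 1)`, where `m` and `m + τ`
agree, in both of them gives another such pair at distance `τ`, with the same `j`. It changes
`f m - f (m + τ)` by exactly `Q/2`: the linear terms and the edge `{p (j - 2), p (j - 1)}` change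
equally for both, while the edge `{p (j - 1), p j}` meets different bits at `p j`. So these pairs
cancel in twos.
-/

/-- Aperiodic autocorrelation of a length-`M` complex sequence `c`. -/
noncomputable def acf (M : ℕ) (c : ℕ → ℂ) (τ : ℕ) : ℂ :=
  ∑ m ∈ Finset.range (M - τ), c m * (starRingEnd ℂ) (c (m + τ))

/-- `(c, d)` is a Golay complementary pair of length `M`. -/
def IsGCP (M : ℕ) (c d : ℕ → ℂ) : Prop :=
  ∀ τ : ℕ, 1 ≤ τ → τ ≤ M - 1 → acf M c τ + acf M d τ = 0

open Finset Function

namespace Nat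

theorem xor_two_pow_of_testBit_false {m e : ℕ} (h : m.testBit e = false) :
    m ^^^ 2 ^ e = m + 2 ^ e := by
  have hr : m % 2 ^ e < 2 ^ e := Nat.mod_lt _ (Nat.two_pow_pos e)
  have heven : Even (m / 2 ^ e) := by
    rw [Nat.testBit_eq_decide_div_mod_eq] at h
    exact Nat.even_iff.mpr (by simpa using h)
  have hm : m = 2 ^ e * (m / 2 ^ e) + m % 2 ^ e := (Nat.div_add_mod m _).symm
  have hm' : m + 2 ^ e = 2 ^ e * (m / 2 ^ e ^^^ 1) + m % 2 ^ e := by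
    rw [Nat.xor_one_of_even heven]; nth_rewrite 1 [hm]; ring
  rw [hm']
  refine Nat.eq_of_testBit_eq fun j => ?_
  conv_lhs => rw [hm]
  rw [Nat.testBit_xor, Nat.testBit_two_pow_mul_add _ hr, Nat.testBit_two_pow_mul_add _ hr,
    Nat.testBit_two_pow, Nat.testBit_xor]
  split_ifs with hj
  · simp [show e ≠ j by omega]
  · congr 1
    rw [Bool.eq_iff_iff, decide_eq_true_iff, Nat.testBit_one_eq_true_iff_self_eq_zero]
    omega

theorem xor_two_pow_of_testBit_true {m e : ℕ} (h : m.testBit e = true) :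
    m ^^^ 2 ^ e = m - 2 ^ e := by
  have h' : (m ^^^ 2 ^ e).testBit e = false := by simp [h]
  have := xor_two_pow_of_testBit_false h'
  rw [Nat.xor_xor_cancel_right] at this
  omega

theorem xor_two_pow_add_comm {m τ e : ℕ} (h : m.testBit e = (m + τ).testBit e) :
    (m ^^^ 2 ^ e) + τ = (m + τ) ^^^ 2 ^ e := by
  cases hb : m.testBit e
  · rw [xor_two_pow_of_testBit_false hb, xor_two_pow_of_testBit_false (hb ▸ h.symm)]
    omega
  · have := ge_two_pow_of_testBit hb
    rw [xor_two_pow_of_testBit_true hb, xor_two_pow_of_testBit_true (hb ▸ h.symm)]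
    omega

theorem xor_two_pow_ne_self {m e : ℕ} : m ^^^ 2 ^ e ≠ m := fun h => by
  simpa using congrArg (testBit · e) h

theorem exists_lt_testBit_ne {x y μ : ℕ} (hx : x < 2 ^ μ) (hy : y < 2 ^ μ) (hxy : x ≠ y) :
    ∃ i < μ, x.testBit i ≠ y.testBit i := by
  obtain ⟨i, hi⟩ := exists_testBit_ne_of_ne hxy
  refine ⟨i, ?_, hi⟩
  by_contra! hμi
  have hpow := Nat.pow_le_pow_right two_pos hμi
  exact hi (by rw [testBit_lt_two_pow (by omega), testBit_lt_two_pow (by omega)])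

end Nat

theorem ZMod.exp_pow_val_eq_stdAddChar {Q : ℕ} [NeZero Q] (x : ZMod Q) :
    Complex.exp (2 * Real.pi * Complex.I / Q) ^ x.val = ZMod.stdAddChar x := by
  rw [ZMod.stdAddChar_apply, ZMod.toCircle_apply, ← Complex.exp_nat_mul]
  ring_nf

theorem ZMod.stdAddChar_natCast_half {Q : ℕ} [NeZero Q] (hQ : Even Q) :
    ZMod.stdAddChar ((Q / 2 : ℕ) : ZMod Q) = -1 := by
  obtain ⟨r, rfl⟩ := hQ
  have hr : (r : ℂ) ≠ 0 := Nat.cast_ne_zero.2 fun h0 => NeZero.ne (r + r) (by omega)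
  rw [ZMod.stdAddChar_apply, ZMod.toCircle_natCast, show (r + r) / 2 = r by omega,
    ← Complex.exp_pi_mul_I]
  congr 1
  push_cast
  field_simp
  ring

theorem one_add_addChar_mul_toNat_sub {R : Type*} [Ring R] (ψ : AddChar R ℂ) {h : R}
    (hh : h + h = 0) (hψ : ψ h = -1) (u v : Bool) :
    1 + ψ (h * u.toNat - h * v.toNat) = if u = v then 2 else 0 := by
  have hneg : -h = h := neg_eq_of_add_eq_zero_left hh
  cases u <;> cases v <;> simp [hψ, hneg] <;> norm_num

theorem acf_addChar_add_acf_addChar {G : Type*} [AddCommGroup G] [Finite G] (ψ : AddChar G ℂ)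
    (F s : ℕ → G) (b' : G) (M τ : ℕ) :
    acf M (fun κ => ψ (F κ)) τ + acf M (fun κ => ψ (F κ + s κ + b')) τ
      = ∑ m ∈ range (M - τ), ψ (F m - F (m + τ)) * (1 + ψ (s m - s (m + τ))) := by
  simp only [acf, ← sum_add_distrib, ← AddChar.map_neg_eq_conj, ← AddChar.map_add_eq_mul,
    mul_one_add]
  refine sum_congr rfl fun m _ => ?_
  congr 2 <;> abel

theorem bijOn_Iio_of_perm {μ : ℕ} (π : Equiv.Perm (Fin μ)) :
    Set.BijOn (fun k => if h : k < μ then (π ⟨k, h⟩ : ℕ) else 0) (Set.Iio μ) (Set.Iio μ) := by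
  refine ⟨fun k hk => ?_, fun k hk l hl hkl => ?_, fun i hi => ?_⟩
  · simp [Set.mem_Iio.1 hk]
  · simpa only [Set.mem_Iio.1 hk, Set.mem_Iio.1 hl, dif_pos, Fin.val_inj, π.injective.eq_iff,
      Fin.mk.injEq] using hkl
  · exact ⟨π.symm ⟨i, hi⟩, (π.symm _).isLt, by simp⟩

section PathQuadratic

variable {R : Type*} [CommRing R]

def pathForm (p : ℕ → ℕ) (n : ℕ) (x : ℕ → R) : R := ∑ k ∈ range n, x (p k) * x (p (k + 1))

theorem pathForm_update_sub_update {p : ℕ → ℕ} {n i : ℕ} (hp : Set.InjOn p (Set.Iic n))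
    (hi : i < n) {x y : ℕ → R} (hxy : ∀ k ≤ i, x (p k) = y (p k)) (c : R) :
    pathForm p n (update x (p i) c) - pathForm p n (update y (p i) c)
      = pathForm p n x - pathForm p n y + (c - x (p i)) * (x (p (i + 1)) - y (p (i + 1))) := by
  have hp' : ∀ k ≤ n, p k = p i → k = i := fun k hk h =>
    hp (Set.mem_Iic.2 hk) (Set.mem_Iic.2 hi.le) h
  calc _ = ∑ k ∈ range n, (x (p k) * x (p (k + 1)) - y (p k) * y (p (k + 1))
        + if k = i then (c - x (p i)) * (x (p (i + 1)) - y (p (i + 1))) else 0) := by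
        rw [pathForm, pathForm, ← sum_sub_distrib]
        refine sum_congr rfl fun k hk => ?_
        have hk := mem_range.1 hk
        rcases lt_trichotomy k i with hki | rfl | hki
        · have h1 : p k ≠ p i := fun h => hki.ne (hp' k hk.le h)
          by_cases hk1 : k + 1 = i
          · subst hk1
            simp [h1, hxy k hki.le, hxy (k + 1) le_rfl]
          · simp [h1, hki.ne, mt (hp' (k + 1) hk) hk1]
        · have h2 : p (k + 1) ≠ p k := fun h => by have := hp' (k + 1) hk h; omega
          simp only [update_self, update_of_ne h2, if_true, ← hxy k le_rfl]
          ring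
        · have h1 : p k ≠ p i := fun h => hki.ne' (hp' k hk.le h)
          have h2 : p (k + 1) ≠ p i := fun h => by have := hp' (k + 1) hk h; omega
          simp [h1, h2, hki.ne']
    _ = _ := by
      rw [sum_add_distrib, sum_ite_eq', if_pos (mem_range.2 hi), pathForm, pathForm,
        sum_sub_distrib]

def pathQuadratic (h : R) (p : ℕ → ℕ) {μ : ℕ} (b : Fin μ → R) (b₀ : R) (x : ℕ → R) : R :=
  h * pathForm p (μ - 1) x + ∑ k : Fin μ, b k * x k + b₀

theorem pathQuadratic_update_sub_update (h : R) {p : ℕ → ℕ} {μ i : ℕ} (b : Fin μ → R) (b₀ : R)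
    (hp : Set.InjOn p (Set.Iic (μ - 1))) (hi : i < μ - 1) {x y : ℕ → R}
    (hxy : ∀ k ≤ i, x (p k) = y (p k)) (c : R) :
    pathQuadratic h p b b₀ (update x (p i) c) - pathQuadratic h p b b₀ (update y (p i) c)
      = pathQuadratic h p b b₀ x - pathQuadratic h p b b₀ y
        + h * ((c - x (p i)) * (x (p (i + 1)) - y (p (i + 1)))) := by
  have hlin : ∑ k : Fin μ, b k * update x (p i) c k - ∑ k : Fin μ, b k * update y (p i) c k
      = ∑ k : Fin μ, b k * x k - ∑ k : Fin μ, b k * y k := by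
    simp only [← sum_sub_distrib, ← mul_sub]
    refine sum_congr rfl fun k _ => ?_
    by_cases hk : (k : ℕ) = p i
    · simp [hk, hxy i le_rfl]
    · simp [update_of_ne hk]
  simp only [pathQuadratic]
  linear_combination h * pathForm_update_sub_update hp hi hxy c + hlin

theorem mul_one_sub_sub_mul_toNat_sub {h : R} (hh : h + h = 0) (a : R) {u v : Bool}
    (huv : u ≠ v) : h * ((1 - a - a) * ((u.toNat : R) - v.toNat)) = h := by
  cases u <;> cases v <;> simp only [ne_eq, not_true_eq_false] at huv <;> simp
  · linear_combination (a - 1) * hh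
  · linear_combination (-a) * hh

end PathQuadratic

def bitVec (R : Type*) [Semiring R] (κ : ℕ) : ℕ → R := fun i => ((κ.testBit i).toNat : R)

theorem bitVec_xor_two_pow {R : Type*} [Ring R] (κ e : ℕ) :
    bitVec R (κ ^^^ 2 ^ e) = update (bitVec R κ) e (1 - bitVec R κ e) := by
  funext i
  by_cases hi : i = e
  · subst hi
    cases hb : κ.testBit i <;> simp [bitVec, hb]
  · simp [bitVec, hi, Ne.symm hi]

noncomputable def firstDiff (p : ℕ → ℕ) (x y : ℕ) : ℕ :=
  sInf {j | x.testBit (p j) ≠ y.testBit (p j)}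

theorem firstDiff_spec {p : ℕ → ℕ} {μ x y : ℕ} (hp : Set.SurjOn p (Set.Iio μ) (Set.Iio μ))
    (hx : x < 2 ^ μ) (hy : y < 2 ^ μ) (hxy : x ≠ y) :
    firstDiff p x y < μ ∧ x.testBit (p (firstDiff p x y)) ≠ y.testBit (p (firstDiff p x y)) ∧
      ∀ k < firstDiff p x y, x.testBit (p k) = y.testBit (p k) := by
  obtain ⟨i, hi, hne⟩ := Nat.exists_lt_testBit_ne hx hy hxy
  obtain ⟨j, hj, rfl⟩ := hp hi
  have hmem : j ∈ {j | x.testBit (p j) ≠ y.testBit (p j)} := hne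
  exact ⟨(Nat.sInf_le hmem).trans_lt hj, Nat.sInf_mem ⟨j, hmem⟩,
    fun k hk => not_not.1 (Nat.notMem_of_lt_sInf hk)⟩

theorem firstDiff_xor_two_pow {p : ℕ → ℕ} {x y e : ℕ} (h : x.testBit e = y.testBit e) :
    firstDiff p (x ^^^ 2 ^ e) (y ^^^ 2 ^ e) = firstDiff p x y := by
  unfold firstDiff
  congr 1
  ext j
  by_cases hj : e = p j
  · simp [hj ▸ h]
  · simp

section PairFlip

variable {p : ℕ → ℕ} {μ τ m : ℕ}

noncomputable def pairFlip (p : ℕ → ℕ) (τ m : ℕ) : ℕ := m ^^^ 2 ^ p (firstDiff p m (m + τ) - 1)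

theorem firstDiff_spec_of_testBit_eq (hp : Set.SurjOn p (Set.Iio μ) (Set.Iio μ)) (hτ : 0 < τ)
    (hm : m + τ < 2 ^ μ) (h0 : m.testBit (p 0) = (m + τ).testBit (p 0)) :
    0 < firstDiff p m (m + τ) ∧ firstDiff p m (m + τ) < μ ∧
      m.testBit (p (firstDiff p m (m + τ))) ≠ (m + τ).testBit (p (firstDiff p m (m + τ))) ∧
      ∀ k < firstDiff p m (m + τ), m.testBit (p k) = (m + τ).testBit (p k) := by
  obtain ⟨hlt, hne, hagree⟩ := firstDiff_spec (x := m) hp (by omega) hm (by omega)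
  exact ⟨Nat.pos_of_ne_zero fun h => hne (by rwa [h]), hlt, hne, hagree⟩

theorem pairFlip_add (h : m.testBit (p (firstDiff p m (m + τ) - 1))
      = (m + τ).testBit (p (firstDiff p m (m + τ) - 1))) :
    pairFlip p τ m + τ = (m + τ) ^^^ 2 ^ p (firstDiff p m (m + τ) - 1) :=
  Nat.xor_two_pow_add_comm h

theorem pairFlip_pairFlip (h : m.testBit (p (firstDiff p m (m + τ) - 1))
      = (m + τ).testBit (p (firstDiff p m (m + τ) - 1))) :
    pairFlip p τ (pairFlip p τ m) = m := by
  rw [pairFlip, pairFlip_add h, pairFlip, firstDiff_xor_two_pow h, Nat.xor_xor_cancel_right]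

end PairFlip

section Cancellation

variable {R : Type*} [CommRing R] {h : R} {p : ℕ → ℕ} {μ τ : ℕ}

theorem pathQuadratic_pairFlip_sub (hh : h + h = 0) (hp : Set.BijOn p (Set.Iio μ) (Set.Iio μ))
    (b : Fin μ → R) (b₀ : R) (hτ : 0 < τ) {m : ℕ} (hm : m + τ < 2 ^ μ)
    (h0 : m.testBit (p 0) = (m + τ).testBit (p 0)) :
    pathQuadratic h p b b₀ (bitVec R (pairFlip p τ m))
        - pathQuadratic h p b b₀ (bitVec R (pairFlip p τ m + τ))
      = pathQuadratic h p b b₀ (bitVec R m) - pathQuadratic h p b b₀ (bitVec R (m + τ)) + h := by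
  obtain ⟨hj0, hjμ, hne, hagree⟩ := firstDiff_spec_of_testBit_eq hp.surjOn hτ hm h0
  have hpivot := hagree _ (Nat.sub_lt hj0 one_pos)
  have hinj : Set.InjOn p (Set.Iic (μ - 1)) :=
    hp.injOn.mono fun k hk => by simp only [Set.mem_Iic, Set.mem_Iio] at hk ⊢; omega
  have hc : bitVec R (m + τ) (p (firstDiff p m (m + τ) - 1))
      = bitVec R m (p (firstDiff p m (m + τ) - 1)) := by simp [bitVec, hpivot]
  rw [pairFlip_add hpivot, pairFlip, bitVec_xor_two_pow, bitVec_xor_two_pow, hc,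
    pathQuadratic_update_sub_update h b b₀ hinj (by omega)
      (fun k hk => by simp [bitVec, hagree k (by omega)]), Nat.sub_add_cancel hj0]
  exact congrArg (_ + ·) (mul_one_sub_sub_mul_toNat_sub hh _ hne)

theorem sum_addChar_pathQuadratic_sub_eq_zero (ψ : AddChar R ℂ) (hh : h + h = 0)
    (hψ : ψ h = -1) (hp : Set.BijOn p (Set.Iio μ) (Set.Iio μ)) (b : Fin μ → R) (b₀ : R)
    (hτ : 0 < τ) :
    ∑ m ∈ range (2 ^ μ - τ) with m.testBit (p 0) = (m + τ).testBit (p 0),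
      ψ (pathQuadratic h p b b₀ (bitVec R m) - pathQuadratic h p b b₀ (bitVec R (m + τ))) = 0 := by
  have hS : ∀ m, m ∈ {m ∈ range (2 ^ μ - τ) | m.testBit (p 0) = (m + τ).testBit (p 0)} ↔
      m + τ < 2 ^ μ ∧ m.testBit (p 0) = (m + τ).testBit (p 0) := fun m => by
    rw [mem_filter, mem_range, Nat.lt_sub_iff_add_lt]
  have hpivot : ∀ m, m + τ < 2 ^ μ → m.testBit (p 0) = (m + τ).testBit (p 0) →
      m.testBit (p (firstDiff p m (m + τ) - 1))
        = (m + τ).testBit (p (firstDiff p m (m + τ) - 1)) := fun m hm h0 => by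
    obtain ⟨hj0, -, -, hagree⟩ := firstDiff_spec_of_testBit_eq hp.surjOn hτ hm h0
    exact hagree _ (Nat.sub_lt hj0 one_pos)
  refine sum_involution (fun m _ => pairFlip p τ m) (fun m hm => ?_)
    (fun _ _ _ => Nat.xor_two_pow_ne_self) (fun m hm => ?_)
    (fun m hm => pairFlip_pairFlip (hpivot m ((hS m).1 hm).1 ((hS m).1 hm).2))
  · obtain ⟨hm, h0⟩ := (hS m).1 hm
    rw [pathQuadratic_pairFlip_sub hh hp b b₀ hτ hm h0, AddChar.map_add_eq_mul, hψ]
    ring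
  · obtain ⟨hm, h0⟩ := (hS m).1 hm
    obtain ⟨hj0, hjμ, -, -⟩ := firstDiff_spec_of_testBit_eq hp.surjOn hτ hm h0
    have he : p (firstDiff p m (m + τ) - 1) < μ := hp.mapsTo (Set.mem_Iio.2 (by omega))
    refine (hS _).2 ⟨?_, ?_⟩ <;> rw [pairFlip_add (hpivot m hm h0)]
    · exact Nat.xor_lt_two_pow hm (Nat.pow_lt_pow_right one_lt_two he)
    · simpa [pairFlip] using h0

end Cancellation

theorem davis_jedwab_GCP_general (Q μ : ℕ) (hQpos : 0 < Q) (hQeven : Even Q)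
    (π : Equiv.Perm (Fin μ)) (b : Fin μ → ZMod Q) (b₀ b' : ZMod Q) :
    -- `bit κ i` is the coefficient `κ_i` in the binary representation `κ = Σ_i κ_i 2^i`
    ∀ bit : ℕ → ℕ → ℕ, (bit = fun κ i => κ / 2 ^ i % 2) →
    -- `p` is the permutation `π` viewed as a function on `{0,…,μ-1} ⊆ ℕ`
    ∀ p : ℕ → ℕ, (p = fun k => if h : k < μ then (π ⟨k, h⟩ : ℕ) else 0) →
    ∀ ω : ℂ, (ω = Complex.exp (2 * Real.pi * Complex.I / Q)) →
    ∀ f : ℕ → ZMod Q,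
      (f = fun κ =>
        (((Q / 2) * ∑ k ∈ Finset.range (μ - 1),
            bit κ (p k) * bit κ (p (k + 1)) : ℕ) : ZMod Q)
        + ∑ k : Fin μ, b k * ((bit κ (k : ℕ) : ℕ) : ZMod Q) + b₀) →
    IsGCP (2 ^ μ)
      (fun κ => ω ^ (f κ).val)
      (fun κ => ω ^ (f κ + (((Q / 2) * bit κ (p 0) : ℕ) : ZMod Q) + b').val) := by
  rintro bit rfl p hp ω rfl f hf τ hτ -
  have : NeZero Q := ⟨hQpos.ne'⟩
  set h : ZMod Q := ((Q / 2 : ℕ) : ZMod Q)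
  have hh : h + h = 0 := by
    obtain ⟨r, rfl⟩ := hQeven
    rw [← Nat.cast_add, show (r + r) / 2 + (r + r) / 2 = r + r by omega, ZMod.natCast_self]
  have hψ := ZMod.stdAddChar_natCast_half hQeven
  have hfq : f = fun κ => pathQuadratic h p b b₀ (bitVec (ZMod Q) κ) := by
    rw [hf]
    funext κ
    simp [pathQuadratic, pathForm, bitVec, ← Nat.toNat_testBit, h, mul_sum]
  have hs : ∀ κ, ((Q / 2 * (κ / 2 ^ p 0 % 2) : ℕ) : ZMod Q) = h * (κ.testBit (p 0)).toNat := by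
    simp [← Nat.toNat_testBit, h]
  simp only [ZMod.exp_pow_val_eq_stdAddChar, hs]
  rw [acf_addChar_add_acf_addChar]
  simp only [one_add_addChar_mul_toNat_sub _ hh hψ, mul_ite, mul_zero, ← sum_filter, ← sum_mul,
    hfq]
  rw [sum_addChar_pathQuadratic_sub_eq_zero _ hh hψ (hp ▸ bijOn_Iio_of_perm π) b b₀ hτ,
    zero_mul]

/-- Davis–Jedwab construction: for even `Q`, a permutation `π` of `{0,…,μ-1}`
(0-based relabelling of `{1,…,μ}`), and `b₁,…,b_μ, b, b' ∈ ℤ_Q`, the quadratic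
generalized Boolean function
`f(κ) = (Q/2)·Σ_{k} κ_{π(k)} κ_{π(k+1)} + Σ_k b_k κ_k + b (mod Q)`
(with `κ = Σ_i κ_i 2^i` the binary representation of `κ`) yields the Golay
complementary pair `(ω^{f_κ})_κ` and `(ω^{f_κ + (Q/2)κ_{π(1)} + b'})_κ` of
length `2^μ`, where `ω = exp(2πi/Q)`. -/
theorem davis_jedwab_GCP (Q μ : ℕ) (hQpos : 0 < Q) (hQeven : Even Q) (hμ : 1 ≤ μ)
    (π : Equiv.Perm (Fin μ)) (b : Fin μ → ZMod Q) (b₀ b' : ZMod Q) :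
    -- `bit κ i` is the coefficient `κ_i` in the binary representation `κ = Σ_i κ_i 2^i`
    ∀ bit : ℕ → ℕ → ℕ, (bit = fun κ i => κ / 2 ^ i % 2) →
    -- `p` is the permutation `π` viewed as a function on `{0,…,μ-1} ⊆ ℕ`
    ∀ p : ℕ → ℕ, (p = fun k => if h : k < μ then (π ⟨k, h⟩ : ℕ) else 0) →
    ∀ ω : ℂ, (ω = Complex.exp (2 * Real.pi * Complex.I / Q)) →
    ∀ f : ℕ → ZMod Q,
      (f = fun κ =>
        (((Q / 2) * ∑ k ∈ Finset.range (μ - 1),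
            bit κ (p k) * bit κ (p (k + 1)) : ℕ) : ZMod Q)
        + ∑ k : Fin μ, b k * ((bit κ (k : ℕ) : ℕ) : ZMod Q) + b₀) →
    IsGCP (2 ^ μ)
      (fun κ => ω ^ (f κ).val)
      (fun κ => ω ^ (f κ + (((Q / 2) * bit κ (p 0) : ℕ) : ZMod Q) + b').val) :=
  davis_jedwab_GCP_general Q μ hQpos hQeven π b b₀ b'
end

section
/- Let K = 4, T > 0, and let g be the Hermite prototype filter g(t) = (1/√T) e^{−2π((t−KT/2)/T)²} Σ_{k ∈ {0,4,8,12,16,20}} β_k H_k(2√π (t−KT/2)/T) for t ∈ [0, KT] and g(t) = 0 otherwise, where H_k denotes the k-th physicists' Hermite polynomial and β_0 = 1.412682577, β_4 = −3.0145×10⁻³, β_8 = −8.8041×10⁻⁶, β_12 = −2.2611×10⁻⁹, β_16 = −4.4570×10⁻¹⁵, β_20 = 1.8633×10⁻¹⁶. Then for every real t, T · g(t)² ≤ ( Σ_{k ∈ {0,4,8,12,16,20}} β_k H_k(0) )², with equality at t = KT/2, and this bound is less than 1.851 (i.e., approximately 2.673 dB). -/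
/-!
Put `z = 2√π (t - KT/2) / T`. On the support of `g`, the factor `1/√T` cancels against `T` and
the squared window is `e^{-z²}`, so `T g(t)² = e^{-z²} P(z)²` with `P = Σ β_k H_k`, and the claim is
`P(z)² ≤ P(0)² e^{z²}`. Through the explicit formula for `H_k`, `P` is an even polynomial of
degree 20, and already the degree-20 Taylor polynomial of `e^{z²}` suffices:
`P(0)² Σ_{i ≤ 20} z^{2i}/i! - P(z)²` is a sum of five explicit squares and a polynomial in `z²`
with nonnegative coefficients.
-/

/-- The `k`-th physicists' Hermite polynomial, via the Rodrigues formula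
`H_k(x) = (−1)^k e^{x²} (d/dx)^k e^{−x²}` (so `H₀(0) = 1`, `H₄(0) = 12`,
`H₈(0) = 1680`, `H₁₂(0) = 665280`, …). -/
noncomputable def physHermite (k : ℕ) (x : ℝ) : ℝ :=
  (-1 : ℝ) ^ k * Real.exp (x ^ 2) * (deriv^[k] fun y : ℝ => Real.exp (-y ^ 2)) x

open Real Finset Polynomial
open scoped Nat

theorem iterate_deriv_exp_neg_sq (n : ℕ) (x : ℝ) :
    deriv^[n] (fun y : ℝ => exp (-y ^ 2)) x =
      √2 ^ n * ((-1) ^ n * aeval (√2 * x) (hermite n) * exp (-x ^ 2)) := by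
  have hsq (y : ℝ) : (√2 * y) ^ 2 / 2 = y ^ 2 := by
    rw [mul_pow, sq_sqrt zero_le_two]; ring
  have hG : ContDiff ℝ n fun y : ℝ => exp (-(y ^ 2 / 2)) := by fun_prop
  have := congrFun (iteratedDeriv_comp_const_mul hG √2) x
  simpa only [iteratedDeriv_eq_iterate, hsq, deriv_gaussian_eq_hermite_mul_gaussian] using this

theorem physHermite_eq_aeval_hermite (n : ℕ) (x : ℝ) :
    physHermite n x = √2 ^ n * aeval (√2 * x) (hermite n) := by
  have hexp : exp (x ^ 2) * exp (-x ^ 2) = 1 := by rw [← exp_add, add_neg_cancel, exp_zero]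
  have hsign : (-1 : ℝ) ^ n * (-1) ^ n = 1 := by rw [← mul_pow]; norm_num
  rw [physHermite, iterate_deriv_exp_neg_sq]
  linear_combination (√2 ^ n * aeval (√2 * x) (hermite n)) * ((-1) ^ n * (-1) ^ n * hexp + hsign)

theorem aeval_hermite_eq_sum (n : ℕ) (y : ℝ) :
    aeval y (hermite n) = ∑ m ∈ range (n / 2 + 1),
      ((-1) ^ m * (2 * m - 1)‼ * n.choose (2 * m) : ℝ) * y ^ (n - 2 * m) := by
  have hcoeff (m : ℕ) (hm : m ∈ range (n / 2 + 1)) :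
      ((hermite n).coeff (n - 2 * m) : ℝ) = (-1) ^ m * (2 * m - 1)‼ * n.choose (2 * m) := by
    obtain ⟨k, rfl⟩ : ∃ k, n = 2 * m + k := Nat.exists_eq_add_of_le (by rw [mem_range] at hm; omega)
    rw [Nat.add_sub_cancel_left, coeff_hermite_explicit, Nat.choose_symm_add]
    push_cast; ring
  have hinj : Set.InjOn (fun m => n - 2 * m) (range (n / 2 + 1)) := by
    intro a ha b hb h
    simp only [coe_range, Set.mem_Iio] at ha hb h
    omega
  rw [aeval_eq_sum_range, natDegree_hermite,
    ← sum_subset (s₁ := (range (n / 2 + 1)).image (fun m => n - 2 * m)), sum_image hinj]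
  · exact sum_congr rfl fun m hm => by rw [← hcoeff m hm, zsmul_eq_mul]
  · intro i hi
    simp only [mem_image, mem_range] at hi ⊢
    omega
  · intro i hi hi'
    simp only [mem_image, mem_range, not_exists, not_and] at hi hi'
    have hodd : Odd (n + i) := by
      rw [Nat.odd_iff]
      by_contra
      exact hi' ((n - i) / 2) (by omega) (by omega)
    rw [coeff_hermite_of_odd_add hodd, zero_smul]

theorem Nat.doubleFactorial_two_mul_sub_one_mul (m : ℕ) :
    (2 * m - 1)‼ * (2 ^ m * m !) = (2 * m)! := by
  cases m with
  | zero => rfl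
  | succ m =>
    rw [← Nat.doubleFactorial_two_mul, show 2 * (m + 1) = 2 * m + 1 + 1 by ring,
      Nat.factorial_eq_mul_doubleFactorial, Nat.add_sub_cancel, mul_comm]

theorem physHermite_eq_sum (n : ℕ) (x : ℝ) :
    physHermite n x =
      ∑ m ∈ range (n / 2 + 1), (-1) ^ m * n ! / (m ! * (n - 2 * m)!) * (2 * x) ^ (n - 2 * m) := by
  rw [physHermite_eq_aeval_hermite, aeval_hermite_eq_sum, mul_sum]
  refine sum_congr rfl fun m hm => ?_
  obtain ⟨k, rfl⟩ : ∃ k, n = 2 * m + k := Nat.exists_eq_add_of_le (by rw [mem_range] at hm; omega)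
  have hsqrt : √2 ^ (2 * m + k) * √2 ^ k = 2 ^ m * 2 ^ k := by
    rw [pow_add, pow_mul, sq_sqrt zero_le_two, mul_assoc, ← mul_pow, mul_self_sqrt zero_le_two]
  have hfact : ((2 * m - 1)‼ * (2 * m + k).choose (2 * m) * 2 ^ m : ℝ) * (m ! * k !) =
      (2 * m + k)! := by
    rw [← Nat.choose_mul_factorial_mul_factorial (Nat.le_add_right (2 * m) k),
      Nat.add_sub_cancel_left, ← Nat.doubleFactorial_two_mul_sub_one_mul]
    push_cast; ring
  rw [Nat.add_sub_cancel_left, ← hfact, mul_div_assoc, mul_div_cancel_right₀ _ (by positivity),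
    mul_pow, mul_pow]
  calc _ = (-1) ^ m * (2 * m - 1)‼ * (2 * m + k).choose (2 * m) * x ^ k *
        (√2 ^ (2 * m + k) * √2 ^ k) := by ring
    _ = _ := by rw [hsqrt]; ring

theorem exp_neg_mul_le_of_le_mul_sum_range {w a c : ℝ} (hw : 0 ≤ w) (hc : 0 ≤ c) (n : ℕ)
    (h : a ≤ c * ∑ i ∈ range n, w ^ i / i !) : exp (-w) * a ≤ c :=
  calc exp (-w) * a ≤ exp (-w) * (c * exp w) := by
        gcongr
        exact h.trans (by gcongr; exact sum_le_exp_of_nonneg hw n)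
    _ = c := by rw [mul_left_comm, ← exp_add, neg_add_cancel, exp_zero, mul_one]

theorem sq_gaussian_window {T : ℝ} (hT : 0 < T) (c t A : ℝ) :
    T * (1 / √T * exp (-2 * π * ((t - c) / T) ^ 2) * A) ^ 2 =
      exp (-(2 * √π * (t - c) / T) ^ 2) * A ^ 2 := by
  have hsqrtT : √T ^ 2 = T := sq_sqrt hT.le
  have hexp : exp (-2 * π * ((t - c) / T) ^ 2) ^ 2 = exp (-(2 * √π * (t - c) / T) ^ 2) := by
    rw [← exp_nat_mul, mul_div_assoc, mul_pow, mul_pow, sq_sqrt pi_pos.le]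
    ring_nf
  rw [mul_pow, mul_pow, div_pow, hsqrtT, hexp]
  field_simp

theorem sq_hermitePrototype_le (β : ℕ → ℝ)
    (hβ : β 0 = 1.412682577 ∧ β 4 = -3.0145e-3 ∧ β 8 = -8.8041e-6 ∧
      β 12 = -2.2611e-9 ∧ β 16 = -4.4570e-15 ∧ β 20 = 1.8633e-16) (z : ℝ) :
    (∑ k ∈ ({0, 4, 8, 12, 16, 20} : Finset ℕ), β k * physHermite k z) ^ 2 ≤
      (∑ k ∈ ({0, 4, 8, 12, 16, 20} : Finset ℕ), β k * physHermite k 0) ^ 2 *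
        ∑ i ∈ range 21, (z ^ 2) ^ i / i ! := by
  obtain ⟨h0, h4, h8, h12, h16, h20⟩ := hβ
  norm_num [sum_range_succ, Nat.factorial, physHermite_eq_sum, h0, h4, h8, h12, h16, h20]
  -- The difference has negative coefficients only at `z^18, z^24, z^28, z^32, z^36`; these are
  -- exactly the cross terms of the five squares below, and what remains is coefficientwise `≥ 0`.
  refine sub_nonneg.mp ((show 0 ≤ 8e-7 * (z ^ 8 * (z ^ 2 - 10)) ^ 2 +
    2.7e-9 * (z ^ 11 * (z ^ 2 - 7)) ^ 2 + 1.7e-11 * (z ^ 13 * (z ^ 2 - 13)) ^ 2 +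
    2.8e-14 * (z ^ 15 * (z ^ 2 - 18)) ^ 2 + 9e-18 * (z ^ 17 * (z ^ 2 - 20)) ^ 2 by positivity).trans
    (sub_nonneg.mp ?_))
  ring_nf
  positivity

theorem sq_hermitePrototype_zero_lt (β : ℕ → ℝ)
    (hβ : β 0 = 1.412682577 ∧ β 4 = -3.0145e-3 ∧ β 8 = -8.8041e-6 ∧
      β 12 = -2.2611e-9 ∧ β 16 = -4.4570e-15 ∧ β 20 = 1.8633e-16) :
    (∑ k ∈ ({0, 4, 8, 12, 16, 20} : Finset ℕ), β k * physHermite k 0) ^ 2 < 1.851 := by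
  obtain ⟨h0, h4, h8, h12, h16, h20⟩ := hβ
  norm_num [sum_range_succ, Nat.factorial, physHermite_eq_sum, h0, h4, h8, h12, h16, h20]

/-- For the Hermite prototype filter with overlapping factor `K = 4`, the
zero-interference preamble PAPR bound holds:
`T·g(t)² ≤ (Σ_{k∈{0,4,8,12,16,20}} β_k H_k(0))²` for all `t`, with equality at
`t = KT/2`, and this bound is less than `1.851` (approximately 2.673 dB). -/
theorem hermite_papr_bound (T : ℝ) (hT : 0 < T) :
    ∀ K : ℝ, K = 4 →
    ∀ β : ℕ → ℝ,
      (β 0 = 1.412682577 ∧ β 4 = -3.0145e-3 ∧ β 8 = -8.8041e-6 ∧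
        β 12 = -2.2611e-9 ∧ β 16 = -4.4570e-15 ∧ β 20 = 1.8633e-16) →
    ∀ g : ℝ → ℝ,
      (g = fun t => if t ∈ Set.Icc (0 : ℝ) (K * T) then
          (1 / Real.sqrt T) * Real.exp (-2 * Real.pi * ((t - K * T / 2) / T) ^ 2)
            * ∑ k ∈ ({0, 4, 8, 12, 16, 20} : Finset ℕ),
                β k * physHermite k (2 * Real.sqrt Real.pi * (t - K * T / 2) / T)
        else 0) →
    (∀ t : ℝ, T * (g t) ^ 2
        ≤ (∑ k ∈ ({0, 4, 8, 12, 16, 20} : Finset ℕ), β k * physHermite k 0) ^ 2) ∧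
    T * (g (K * T / 2)) ^ 2
        = (∑ k ∈ ({0, 4, 8, 12, 16, 20} : Finset ℕ), β k * physHermite k 0) ^ 2 ∧
    (∑ k ∈ ({0, 4, 8, 12, 16, 20} : Finset ℕ), β k * physHermite k 0) ^ 2 < 1.851 := by
  rintro K rfl β hβ g rfl
  refine ⟨fun t => ?_, ?_, sq_hermitePrototype_zero_lt β hβ⟩
  · dsimp only
    split_ifs
    · rw [sq_gaussian_window hT]
      exact exp_neg_mul_le_of_le_mul_sum_range (sq_nonneg _) (sq_nonneg _) 21
        (sq_hermitePrototype_le β hβ _)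
    · rw [zero_pow two_ne_zero, mul_zero]
      positivity
  · have hc : 4 * T / 2 ∈ Set.Icc 0 (4 * T) := ⟨by linarith, by linarith⟩
    dsimp only
    rw [if_pos hc, sq_gaussian_window hT, sub_self, mul_zero, zero_div]
    simp
end

section
/- Let (c, d) be a Golay complementary pair of length M and let d ≥ 0 be an integer. Define the sparsified sequences c' and d' of length (d+1)M by c'_{(d+1)m} = c_m and d'_{(d+1)m} = d_m for 0 ≤ m ≤ M−1, and c'_k = d'_k = 0 at all other indices (i.e., c' = c ⊗ [1, 0^{1×d}] and d' = d ⊗ [1, 0^{1×d}]). Then (c', d') is a Golay complementary pair of length (d+1)M. -/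
/-- The sequence `e ⊗ [1, 0^{1×(n-1)}]`. -/
def upsample (n : ℕ) (e : ℕ → ℂ) (k : ℕ) : ℂ :=
  if k % n = 0 then e (k / n) else 0

theorem upsample_mul {n : ℕ} (hn : 0 < n) (e : ℕ → ℂ) (j : ℕ) :
    upsample n e (n * j) = e j := by
  simp [upsample, Nat.mul_div_cancel_left j hn]

theorem upsample_of_not_dvd {n k : ℕ} (e : ℕ → ℂ) (hk : ¬ n ∣ k) : upsample n e k = 0 := by
  simp [upsample, ← Nat.dvd_iff_mod_eq_zero, hk]

theorem acf_upsample_of_not_dvd (L : ℕ) {n τ : ℕ} (e : ℕ → ℂ) (hτ : ¬ n ∣ τ) :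
    acf L (upsample n e) τ = 0 := by
  refine Finset.sum_eq_zero fun m _ => ?_
  by_cases hm : n ∣ m
  · rw [upsample_of_not_dvd e fun hmτ => hτ ((Nat.dvd_add_right hm).mp hmτ), map_zero, mul_zero]
  · rw [upsample_of_not_dvd e hm, zero_mul]

theorem acf_upsample_mul {n : ℕ} (hn : 0 < n) (M : ℕ) (e : ℕ → ℂ) (t : ℕ) :
    acf (n * M) (upsample n e) (n * t) = acf M e t := by
  rw [acf, acf, ← Nat.mul_sub]
  refine (Finset.sum_of_injOn (n * ·) (mul_right_injective₀ hn.ne').injOn ?_ ?_ ?_).symm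
  · intro j hj
    simpa [hn] using hj
  · rintro m hm hm_not_image
    have hnm : ¬ n ∣ m := by
      rintro ⟨j, rfl⟩
      exact hm_not_image ⟨j, by simpa [hn] using hm, rfl⟩
    rw [upsample_of_not_dvd e hnm, zero_mul]
  · intro j _
    rw [← mul_add, upsample_mul hn, upsample_mul hn]

/-- Sparsification of a Golay complementary pair: if `(c, d)` is a GCP of
length `M` and `D ≥ 0`, then the sequences `c ⊗ [1, 0^{1×D}]` and
`d ⊗ [1, 0^{1×D}]` — which take the values `c_m`, `d_m` at the indices
`(D+1)m` (`0 ≤ m ≤ M−1`) and `0` elsewhere — form a GCP of length `(D+1)M`. -/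
theorem GCP_sparsification (M : ℕ) (c d : ℕ → ℂ) (h : IsGCP M c d) (D : ℕ) :
    IsGCP ((D + 1) * M)
      (fun k => if k % (D + 1) = 0 then c (k / (D + 1)) else 0)
      (fun k => if k % (D + 1) = 0 then d (k / (D + 1)) else 0) := by
  change IsGCP ((D + 1) * M) (upsample (D + 1) c) (upsample (D + 1) d)
  intro τ hτ₁ hτ₂
  by_cases hdvd : D + 1 ∣ τ
  · obtain ⟨t, rfl⟩ := hdvd
    have ht₀ : 1 ≤ t := Nat.one_le_iff_ne_zero.mpr (by rintro rfl; simp at hτ₁)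
    have htM : t < M := Nat.lt_of_mul_lt_mul_left (a := D + 1) (by omega)
    rw [acf_upsample_mul D.succ_pos, acf_upsample_mul D.succ_pos]
    exact h t ht₀ (by omega)
  · rw [acf_upsample_of_not_dvd _ _ hdvd, acf_upsample_of_not_dvd _ _ hdvd, add_zero]
end
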